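/- In the proof system ⊢d3, axiom scheme ((6)) can be replaced by axiom scheme ((8)) ∃v(φ ∧ ∃vψ) ↔ (∃vφ ∧ ∃vψ): the Hilbert-style system with rules Modus Ponens and Generalization and axiom schemes ((1))-((5)), ((7)) and ((8)) derives exactly the same formulas of Fmd3 as ⊢d3. -/
import Mathlib


/- Core: the logic Ld3 : syntax, proof system, semantics, Gödel numbering. -/

inductive Var : Type
  | x
  | y
  | z
deriving DecidableEq

def Var.toNat : Var → Nat
  | .x => 0
  | .y => 1
  | .z => 2

/-- Formulas of the logic `Ld3`: one atomic formula `P(x,y,z)`, connectives `∨, ¬`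
and quantifiers `∃x, ∃y, ∃z`. -/
inductive Fmd3 : Type
  | P : Fmd3
  | or : Fmd3 → Fmd3 → Fmd3
  | not : Fmd3 → Fmd3
  | ex : Var → Fmd3 → Fmd3
deriving DecidableEq

namespace Fmd3

def and (φ ψ : Fmd3) : Fmd3 := .not (.or (.not φ) (.not ψ))

def imp (φ ψ : Fmd3) : Fmd3 := .or (.not φ) ψ

def iff (φ ψ : Fmd3) : Fmd3 := (φ.imp ψ).and (ψ.imp φ)

def all (v : Var) (φ : Fmd3) : Fmd3 := .not (.ex v (.not φ))

def freeVars : Fmd3 → Finset Var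
  | .P => {Var.x, Var.y, Var.z}
  | .or a b => a.freeVars ∪ b.freeVars
  | .not a => a.freeVars
  | .ex v a => a.freeVars.erase v

/-- `Fmd3⁰`: sentences. -/
def IsSentence (φ : Fmd3) : Prop := φ.freeVars = ∅

/-- `Fmd3¹`: formulas whose only free variable is `x`. -/
def OneFree (φ : Fmd3) : Prop := φ.freeVars ⊆ {Var.x}

/-- `φ` is a propositional tautology: every Boolean valuation that respects
`∨` and `¬` (treating other formulas as propositional atoms) makes `φ` true. -/
def Taut (φ : Fmd3) : Prop :=
  ∀ v : Fmd3 → Bool,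
    (∀ a b : Fmd3, v (.or a b) = (v a || v b)) →
    (∀ a : Fmd3, v (.not a) = !(v a)) →
    v φ = true

/-- Satisfaction of an `Fmd3` formula in a model `(M, R)` under evaluation `e`. -/
def Sat (M : Type) (R : M → M → M → Prop) : Fmd3 → (Var → M) → Prop
  | .P, e => R (e .x) (e .y) (e .z)
  | .or a b, e => Sat M R a e ∨ Sat M R b e
  | .not a, e => ¬ Sat M R a e
  | .ex v a, e => ∃ m : M, Sat M R a (Function.update e v m)

/-- A standard (injective) Gödel numbering of `Fmd3`. -/
def encode : Fmd3 → Nat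
  | .P => 0
  | .or a b => 4 * Nat.pair a.encode b.encode + 1
  | .not a => 4 * a.encode + 2
  | .ex v a => 4 * Nat.pair v.toNat a.encode + 3

end Fmd3

/-- The Hilbert-style proof system `⊢d3`, with rules Modus Ponens and Generalization,
and axiom schemes ((1))–((7)). -/
inductive Prf (T : Set Fmd3) : Fmd3 → Prop
  | hyp {φ : Fmd3} : φ ∈ T → Prf T φ
  | taut {φ : Fmd3} : φ.Taut → Prf T φ
  | ax2 (v : Var) (φ ψ : Fmd3) :
      Prf T ((Fmd3.all v (φ.imp ψ)).imp ((Fmd3.ex v φ).imp (Fmd3.ex v ψ)))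
  | ax3 (v : Var) (φ : Fmd3) : Prf T (φ.imp (.ex v φ))
  | ax4 (v : Var) (φ : Fmd3) : Prf T ((Fmd3.ex v (.ex v φ)).imp (.ex v φ))
  | ax5 (v : Var) (φ ψ : Fmd3) :
      Prf T ((Fmd3.ex v (φ.or ψ)).iff ((Fmd3.ex v φ).or (.ex v ψ)))
  | ax6 (v : Var) (φ : Fmd3) :
      Prf T ((Fmd3.ex v (.not (.ex v φ))).imp (.not (.ex v φ)))
  | ax7 (v w : Var) (φ : Fmd3) :
      Prf T ((Fmd3.ex v (.ex w φ)).imp (.ex w (.ex v φ)))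
  | mp {φ ψ : Fmd3} : Prf T (φ.imp ψ) → Prf T φ → Prf T ψ
  | gen {φ : Fmd3} (v : Var) : Prf T φ → Prf T (.all v φ)

/-- Semantic consequence for `Ld3`: every model of `T` satisfies `φ` under every
evaluation. -/
def SemConsD (T : Set Fmd3) (φ : Fmd3) : Prop :=
  ∀ (M : Type) (_ : Nonempty M) (R : M → M → M → Prop),
    (∀ ψ ∈ T, ∀ e : Var → M, ψ.Sat M R e) → ∀ e : Var → M, φ.Sat M R e

/-- Validity for `Ld3`. -/
def ValidD (φ : Fmd3) : Prop := SemConsD ∅ φ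

/-- A set of `Fmd3`-formulas is recursive (decidable w.r.t. the standard
Gödel numbering). -/
def RecSetD (S : Set Fmd3) : Prop :=
  ∃ g : Nat → Bool, Computable g ∧ ∀ φ : Fmd3, φ ∈ S ↔ g φ.encode = true

/-- The Hilbert-style proof system with axiom scheme ((8))
`∃v(φ ∧ ∃vψ) ↔ (∃vφ ∧ ∃vψ)` in place of ((6)). -/
inductive Prf8 (T : Set Fmd3) : Fmd3 → Prop
  | hyp {φ : Fmd3} : φ ∈ T → Prf8 T φ
  | taut {φ : Fmd3} : φ.Taut → Prf8 T φ
  | ax2 (v : Var) (φ ψ : Fmd3) :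
      Prf8 T ((Fmd3.all v (φ.imp ψ)).imp ((Fmd3.ex v φ).imp (Fmd3.ex v ψ)))
  | ax3 (v : Var) (φ : Fmd3) : Prf8 T (φ.imp (.ex v φ))
  | ax4 (v : Var) (φ : Fmd3) : Prf8 T ((Fmd3.ex v (.ex v φ)).imp (.ex v φ))
  | ax5 (v : Var) (φ ψ : Fmd3) :
      Prf8 T ((Fmd3.ex v (φ.or ψ)).iff ((Fmd3.ex v φ).or (.ex v ψ)))
  | ax8 (v : Var) (φ ψ : Fmd3) :
      Prf8 T ((Fmd3.ex v (φ.and (.ex v ψ))).iff ((Fmd3.ex v φ).and (.ex v ψ)))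
  | ax7 (v w : Var) (φ : Fmd3) :
      Prf8 T ((Fmd3.ex v (.ex w φ)).imp (.ex w (.ex v φ)))
  | mp {φ ψ : Fmd3} : Prf8 T (φ.imp ψ) → Prf8 T φ → Prf8 T ψ
  | gen {φ : Fmd3} (v : Var) : Prf8 T φ → Prf8 T (.all v φ)

section Aux

open Fmd3

/-- Abstract interface: the common part of the two proof systems. -/
structure Sys (D : Fmd3 → Prop) : Prop where
  taut : ∀ {φ : Fmd3}, φ.Taut → D φ
  ax2 : ∀ (v : Var) (φ ψ : Fmd3),
      D ((Fmd3.all v (φ.imp ψ)).imp ((Fmd3.ex v φ).imp (Fmd3.ex v ψ)))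
  ax4 : ∀ (v : Var) (φ : Fmd3), D ((Fmd3.ex v (.ex v φ)).imp (.ex v φ))
  ax5 : ∀ (v : Var) (φ ψ : Fmd3),
      D ((Fmd3.ex v (φ.or ψ)).iff ((Fmd3.ex v φ).or (.ex v ψ)))
  mp : ∀ {φ ψ : Fmd3}, D (φ.imp ψ) → D φ → D ψ
  gen : ∀ {φ : Fmd3} (v : Var), D φ → D (.all v φ)

namespace Aux

lemma tautT1 (a b c : Fmd3) : ((a.imp b).imp ((b.imp c).imp (a.imp c))).Taut := by
  intro v hor hnot
  simp only [Fmd3.imp, hor, hnot]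
  cases v a <;> cases v b <;> cases v c <;> rfl

lemma tautT2 (a b : Fmd3) : ((a.iff b).imp (a.imp b)).Taut := by
  intro v hor hnot
  simp only [Fmd3.imp, Fmd3.iff, Fmd3.and, hor, hnot]
  cases v a <;> cases v b <;> rfl

lemma tautT3 (a b : Fmd3) : ((a.iff b).imp (b.imp a)).Taut := by
  intro v hor hnot
  simp only [Fmd3.imp, Fmd3.iff, Fmd3.and, hor, hnot]
  cases v a <;> cases v b <;> rfl

lemma tautT4 (a b : Fmd3) : ((a.imp b).imp ((b.imp a).imp (a.iff b))).Taut := by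
  intro v hor hnot
  simp only [Fmd3.imp, Fmd3.iff, Fmd3.and, hor, hnot]
  cases v a <;> cases v b <;> rfl

lemma tautT5 (a b : Fmd3) : ((a.and b).imp a).Taut := by
  intro v hor hnot
  simp only [Fmd3.imp, Fmd3.and, hor, hnot]
  cases v a <;> cases v b <;> rfl

lemma tautT6 (a b : Fmd3) : ((a.and b).imp b).Taut := by
  intro v hor hnot
  simp only [Fmd3.imp, Fmd3.and, hor, hnot]
  cases v a <;> cases v b <;> rfl

lemma tautT7 (c a b : Fmd3) : ((c.imp a).imp ((c.imp b).imp (c.imp (a.and b)))).Taut := by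
  intro v hor hnot
  simp only [Fmd3.imp, Fmd3.and, hor, hnot]
  cases v a <;> cases v b <;> cases v c <;> rfl

lemma tautT8 (a b : Fmd3) : (a.imp (b.imp (a.and b))).Taut := by
  intro v hor hnot
  simp only [Fmd3.imp, Fmd3.and, hor, hnot]
  cases v a <;> cases v b <;> rfl

lemma tautT9 (p q r s : Fmd3) :
    ((p.imp (q.or r)).imp ((q.imp s.not).imp ((p.and s).imp r))).Taut := by
  intro v hor hnot
  simp only [Fmd3.imp, Fmd3.and, hor, hnot]
  cases v p <;> cases v q <;> cases v r <;> cases v s <;> rfl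

lemma tautT10 (e : Fmd3) : (((e.not).and e).not).Taut := by
  intro v hor hnot
  simp only [Fmd3.and, hor, hnot]
  cases v e <;> rfl

lemma tautT11 (c : Fmd3) : (c.imp c.not.not).Taut := by
  intro v hor hnot
  simp only [Fmd3.imp, hor, hnot]
  cases v c <;> rfl

lemma tautT12 (y x : Fmd3) : ((y.imp x).imp (x.not.imp y.not)).Taut := by
  intro v hor hnot
  simp only [Fmd3.imp, hor, hnot]
  cases v x <;> cases v y <;> rfl

lemma tautT13 (a e q : Fmd3) :
    (((a.and e).imp q).imp ((q.not).imp (a.imp e.not))).Taut := by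
  intro v hor hnot
  simp only [Fmd3.imp, Fmd3.and, hor, hnot]
  cases v a <;> cases v e <;> cases v q <;> rfl

variable {D : Fmd3 → Prop} (S : Sys D)
include S

lemma impTrans {a b c : Fmd3} (h1 : D (a.imp b)) (h2 : D (b.imp c)) :
    D (a.imp c) :=
  S.mp (S.mp (S.taut (tautT1 a b c)) h1) h2

lemma iffElim1 {a b : Fmd3} (h : D (a.iff b)) : D (a.imp b) :=
  S.mp (S.taut (tautT2 a b)) h

lemma iffElim2 {a b : Fmd3} (h : D (a.iff b)) : D (b.imp a) :=
  S.mp (S.taut (tautT3 a b)) h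

lemma iffIntro {a b : Fmd3} (h1 : D (a.imp b)) (h2 : D (b.imp a)) :
    D (a.iff b) :=
  S.mp (S.mp (S.taut (tautT4 a b)) h1) h2

lemma mono {a b : Fmd3} (v : Var) (h : D (a.imp b)) :
    D ((Fmd3.ex v a).imp (.ex v b)) :=
  S.mp (S.ax2 v a b) (S.gen v h)

/-- In the common system, ((6)) yields ((8)). -/
lemma ax8_of_ax6
    (h6 : ∀ (v : Var) (φ : Fmd3), D ((Fmd3.ex v (.not (.ex v φ))).imp (.not (.ex v φ))))
    (v : Var) (φ ψ : Fmd3) :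
    D ((Fmd3.ex v (φ.and (.ex v ψ))).iff ((Fmd3.ex v φ).and (.ex v ψ))) := by
  set E := Fmd3.ex v ψ with hE
  set C := φ.and E with hC
  -- forward direction
  have f1 : D ((Fmd3.ex v C).imp (.ex v φ)) := mono S v (S.taut (tautT5 φ E))
  have f2 : D ((Fmd3.ex v C).imp E) :=
    impTrans S (mono S v (S.taut (tautT6 φ E))) (S.ax4 v ψ)
  have fwd : D ((Fmd3.ex v C).imp ((Fmd3.ex v φ).and E)) :=
    S.mp (S.mp (S.taut (tautT7 (Fmd3.ex v C) (Fmd3.ex v φ) E)) f1) f2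
  -- backward direction
  have b1 : D ((Fmd3.ex v φ).imp (.ex v (E.imp C))) :=
    mono S v (S.taut (tautT8 φ E))
  have b2 : D ((Fmd3.ex v (E.imp C)).imp ((Fmd3.ex v E.not).or (.ex v C))) :=
    iffElim1 S (S.ax5 v E.not C)
  have c1 : D ((Fmd3.ex v φ).imp ((Fmd3.ex v E.not).or (.ex v C))) :=
    impTrans S b1 b2
  have b3 : D ((Fmd3.ex v E.not).imp E.not) := h6 v ψ
  have bwd : D (((Fmd3.ex v φ).and E).imp (.ex v C)) :=
    S.mp (S.mp (S.taut (tautT9 (Fmd3.ex v φ) (Fmd3.ex v E.not) (Fmd3.ex v C) E)) c1) b3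
  exact iffIntro S fwd bwd

/-- In the common system, ((8)) yields ((6)). -/
lemma ax6_of_ax8
    (h8 : ∀ (v : Var) (φ ψ : Fmd3),
      D ((Fmd3.ex v (φ.and (.ex v ψ))).iff ((Fmd3.ex v φ).and (.ex v ψ))))
    (v : Var) (φ : Fmd3) :
    D ((Fmd3.ex v (.not (.ex v φ))).imp (.not (.ex v φ))) := by
  set E := Fmd3.ex v φ with hE
  set A := Fmd3.not E with hA
  set C := A.and E with hC
  have bwd8 : D (((Fmd3.ex v A).and E).imp (.ex v C)) := iffElim2 S (h8 v A φ)
  -- ¬∃v C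
  have t : D C.not := S.taut (tautT10 E)
  have gt : D (Fmd3.not (.ex v (Fmd3.not C.not))) := S.gen v t
  have m : D ((Fmd3.ex v C).imp (.ex v (Fmd3.not C.not))) :=
    mono S v (S.taut (tautT11 C))
  have notExC : D (Fmd3.not (.ex v C)) :=
    S.mp (S.mp (S.taut (tautT12 (Fmd3.ex v C) (Fmd3.ex v (Fmd3.not C.not)))) m) gt
  exact S.mp (S.mp (S.taut (tautT13 (Fmd3.ex v A) E (Fmd3.ex v C))) bwd8) notExC

end Aux

lemma sysPrf : Sys (Prf ∅) :=
  ⟨fun h => Prf.taut h, Prf.ax2, Prf.ax4, Prf.ax5, fun h1 h2 => Prf.mp h1 h2,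
   fun v h => Prf.gen v h⟩

lemma sysPrf8 : Sys (Prf8 ∅) :=
  ⟨fun h => Prf8.taut h, Prf8.ax2, Prf8.ax4, Prf8.ax5, fun h1 h2 => Prf8.mp h1 h2,
   fun v h => Prf8.gen v h⟩

end Aux

/-- **Theorem.** Axiom scheme ((6)) can be replaced by ((8)): the two systems
derive exactly the same formulas of `Fmd3`. -/
theorem ax6_replaceable_by_ax8 : ∀ φ : Fmd3, Prf ∅ φ ↔ Prf8 ∅ φ := by
  intro φ
  constructor
  · intro h
    induction h with
    | hyp h => exact absurd h (Set.notMem_empty _)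
    | taut h => exact Prf8.taut h
    | ax2 v φ ψ => exact Prf8.ax2 v φ ψ
    | ax3 v φ => exact Prf8.ax3 v φ
    | ax4 v φ => exact Prf8.ax4 v φ
    | ax5 v φ ψ => exact Prf8.ax5 v φ ψ
    | ax6 v φ => exact Aux.ax6_of_ax8 sysPrf8 Prf8.ax8 v φ
    | ax7 v w φ => exact Prf8.ax7 v w φ
    | mp _ _ ih1 ih2 => exact Prf8.mp ih1 ih2
    | gen v _ ih => exact Prf8.gen v ih
  · intro h
    induction h with
    | hyp h => exact absurd h (Set.notMem_empty _)
    | taut h => exact Prf.taut h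
    | ax2 v φ ψ => exact Prf.ax2 v φ ψ
    | ax3 v φ => exact Prf.ax3 v φ
    | ax4 v φ => exact Prf.ax4 v φ
    | ax5 v φ ψ => exact Prf.ax5 v φ ψ
    | ax8 v φ ψ => exact Aux.ax8_of_ax6 sysPrf Prf.ax6 v φ ψ
    | ax7 v w φ => exact Prf.ax7 v w φ
    | mp _ _ ih1 ih2 => exact Prf.mp ih1 ih2
    | gen v _ ih => exact Prf.gen v ih
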